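/- Fix ε ∈ (0,1) and ε' > 0, and assume |α| ≤ Q·n/(8(1+ε')). Then the number of edges of the 1-skeleton of Y with both endpoints in S satisfies |E(S)| ≤ |α|·( 1/((1−ε)²(1+ε')) + 12q/((1−ε)Q) ). -/

import Mathlib

open scoped Classical
open Matrix

structure SComplex (V : Type) [DecidableEq V] where
  faces : Finset (Finset V)
  down_closed : ∀ σ ∈ faces, ∀ τ ⊆ σ, τ ∈ faces

namespace SComplex

variable {V : Type} [Fintype V] [DecidableEq V]

/-- The faces of cardinality `n` (i.e. of dimension `n-1`); so `K Y 2` is the edge set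
and `K Y 3` the set of triangles. -/
def K (X : SComplex V) (n : ℕ) : Finset (Finset V) := X.faces.filter fun σ => σ.card = n

/-- `X` is pure with all facets (maximal faces) of cardinality `D` (dimension `D-1`). -/
def IsPure (X : SComplex V) (D : ℕ) : Prop :=
  X.faces.Nonempty ∧ ∀ σ ∈ X.faces, ∃ τ ∈ X.faces, σ ⊆ τ ∧ τ.card = D

end SComplex

variable {V : Type} [Fintype V] [DecidableEq V]

/-- `t_i`: the number of triangles of `Y` containing exactly `i` edges of `α`. -/
def tcount (Y : SComplex V) (α : Finset (Finset V)) (i : ℕ) : ℕ :=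
  ((Y.K 3).filter fun τ => (α.filter fun e => e ⊆ τ).card = i).card

/-- `α_v`: the set of edges of `α` containing the vertex `v`. -/
def alphaV (α : Finset (Finset V)) (v : V) : Finset (Finset V) :=
  α.filter fun e => v ∈ e

/-- The 1-skeleton of `Y`, as a simple graph on the vertex type. -/
def skeletonGraph (Y : SComplex V) : SimpleGraph V where
  Adj u w := u ≠ w ∧ ({u, w} : Finset V) ∈ Y.faces
  symm := by
    constructor
    intro u w h
    exact ⟨h.1.symm, by rw [Finset.pair_comm]; exact h.2⟩
  loopless := by constructor; intro u h; exact h.1 rfl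

/-- The vertices of the link of `v`: the edges of `Y` containing `v`. -/
def linkVerts (Y : SComplex V) (v : V) : Finset (Finset V) :=
  (Y.K 2).filter fun e => v ∈ e

/-- The link graph `Y_v`: vertices are the edges of `Y` containing `v`, two edges being
adjacent iff they lie in a common triangle of `Y`. -/
def linkGraph (Y : SComplex V) (v : V) : SimpleGraph ↥(linkVerts Y v) where
  Adj e f := e ≠ f ∧ (e.1 ∪ f.1) ∈ Y.K 3
  symm := by
    constructor
    intro e f h
    exact ⟨h.1.symm, by rw [Finset.union_comm]; exact h.2⟩
  loopless := by constructor; intro e h; exact h.1 rfl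

/-- The standing hypotheses on the 2-dimensional complex `Y` (with `Q = 2(q²+q+1)`):
`q ≥ 2`; `Y` is finite pure 2-dimensional; (i) every edge lies in exactly `q+1` triangles;
(ii) the 1-skeleton is a connected `Q`-regular graph whose adjacency eigenvalues other than
`Q` have absolute value at most `6q`. -/
def Setup2 (q : ℕ) (Y : SComplex V) : Prop :=
  2 ≤ q ∧ Y.IsPure 3 ∧
  (∀ e ∈ Y.K 2, ((Y.K 3).filter fun τ => e ⊆ τ).card = q + 1) ∧
  (skeletonGraph Y).Connected ∧
  (∀ v : V, (skeletonGraph Y).degree v = 2 * (q ^ 2 + q + 1)) ∧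
  (∀ mu : ℝ, (∃ f : V → ℝ, f ≠ 0 ∧ (skeletonGraph Y).adjMatrix ℝ *ᵥ f = mu • f) →
    mu = 2 * ((q : ℝ) ^ 2 + q + 1) ∨ |mu| ≤ 6 * (q : ℝ))

/-!
Let `S` be the set of thick vertices. Each thick vertex lies in at least `(1-ε)Q/2` edges of `α`
and each edge of `α` has two endpoints, so `|S| ≤ 4|α|/((1-ε)Q)`. On the other side,
`2|E(S)| ≤ ⟨1_S, A 1_S⟩` for the adjacency matrix `A` of the 1-skeleton. Expanding `1_S` in an
orthonormal eigenbasis of `A`, the eigenvectors for the eigenvalue `Q` are constant because the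
graph is connected, so they contribute at most `Q|S|²/n`; all other eigenvalues are at most `6q`,
contributing at most `6q|S|` (expander mixing). Inserting the bound on `|S|` and
`|α| ≤ Qn/(8(1+ε'))` gives the claim.
-/

open Finset

theorem Finset.sum_card_filter_mem_eq_sum_card {α : Type*} [DecidableEq α] {s : Finset α}
    {F : Finset (Finset α)} (hF : ∀ e ∈ F, e ⊆ s) :
    ∑ a ∈ s, #{e ∈ F | a ∈ e} = ∑ e ∈ F, #e := by
  simp_rw [card_filter]
  rw [sum_comm]
  refine sum_congr rfl fun e he => ?_
  rw [← card_filter, filter_mem_eq_inter, inter_eq_right.mpr (hF e he)]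

theorem Finset.sum_card_filter_mem_eq_two_mul_card {α : Type*} [DecidableEq α] {s : Finset α}
    {F : Finset (Finset α)} (hF : ∀ e ∈ F, e ⊆ s) (h2 : ∀ e ∈ F, #e = 2) :
    ∑ a ∈ s, #{e ∈ F | a ∈ e} = 2 * #F := by
  rw [sum_card_filter_mem_eq_sum_card hF, sum_congr rfl h2, sum_const, smul_eq_mul, mul_comm]

namespace OrthonormalBasis

variable {ι n : Type*} [Fintype ι] [Fintype n]

theorem sum_dotProduct_mul_dotProduct (b : OrthonormalBasis ι ℝ (EuclideanSpace ℝ n))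
    (x y : n → ℝ) : ∑ i, (⇑(b i) ⬝ᵥ x) * (⇑(b i) ⬝ᵥ y) = x ⬝ᵥ y := by
  have := b.sum_inner_mul_inner (WithLp.toLp 2 x) (WithLp.toLp 2 y)
  simp only [EuclideanSpace.inner_eq_star_dotProduct, star_trivial] at this
  simpa [dotProduct_comm] using this

theorem sum_sq_dotProduct (b : OrthonormalBasis ι ℝ (EuclideanSpace ℝ n)) (x : n → ℝ) :
    ∑ i, (⇑(b i) ⬝ᵥ x) ^ 2 = x ⬝ᵥ x := by
  simp only [sq, b.sum_dotProduct_mul_dotProduct]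

end OrthonormalBasis

namespace Matrix.IsHermitian

variable {n : Type*} [Fintype n] [DecidableEq n] {A : Matrix n n ℝ}

theorem dotProduct_mulVec_eq_sum_eigenvalues (hA : A.IsHermitian) (x : n → ℝ) :
    x ⬝ᵥ A *ᵥ x = ∑ i, hA.eigenvalues i * (⇑(hA.eigenvectorBasis i) ⬝ᵥ x) ^ 2 := by
  rw [← hA.eigenvectorBasis.sum_dotProduct_mul_dotProduct]
  refine sum_congr rfl fun i _ => ?_
  have hsymm : Aᵀ = A := by simpa using hA.eq
  rw [dotProduct_mulVec, ← mulVec_transpose, hsymm, hA.mulVec_eigenvectorBasis, smul_dotProduct,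
    smul_eq_mul]
  ring

end Matrix.IsHermitian

theorem Matrix.dotProduct_eq_dotProduct_const_mean {n : Type*} [Fintype n] {u : n → ℝ}
    (hu : ∀ v w, u v = u w) (x : n → ℝ) :
    u ⬝ᵥ x = u ⬝ᵥ Function.const n ((∑ v, x v) / Fintype.card n) := by
  rcases isEmpty_or_nonempty n with hn | hn
  · simp [dotProduct]
  have hcard : (Fintype.card n : ℝ) ≠ 0 := Nat.cast_ne_zero.mpr Fintype.card_ne_zero
  rw [show u = Function.const n (u hn.some) from funext fun v => hu v _]
  simp only [dotProduct, Function.const_apply, ← mul_sum, sum_const, card_univ, nsmul_eq_mul]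
  field_simp

namespace SimpleGraph

variable {ι : Type*} [Fintype ι] [DecidableEq ι] {G : SimpleGraph ι} [DecidableRel G.Adj] {d : ℕ}

theorem eq_of_adjMatrix_mulVec_eq_smul (hG : G.Connected) (hd : G.IsRegularOfDegree d)
    {x : ι → ℝ} (hx : G.adjMatrix ℝ *ᵥ x = (d : ℝ) • x) (v w : ι) : x v = x w := by
  have hdeg : G.degMatrix ℝ *ᵥ x = (d : ℝ) • x := by
    ext v; simp [degMatrix_mulVec_apply, hd v]
  have hlap : G.lapMatrix ℝ *ᵥ x = 0 := by rw [lapMatrix, sub_mulVec, hdeg, hx, sub_self]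
  exact (lapMatrix_mulVec_eq_zero_iff_forall_reachable G).mp hlap v w (hG.preconnected v w)

theorem dotProduct_adjMatrix_mulVec_le (hG : G.Connected) (hd : G.IsRegularOfDegree d)
    {lam : ℝ} (hlam : 0 ≤ lam)
    (hspec : ∀ μ : ℝ, (∃ f : ι → ℝ, f ≠ 0 ∧ G.adjMatrix ℝ *ᵥ f = μ • f) → μ = d ∨ |μ| ≤ lam)
    (x : ι → ℝ) :
    x ⬝ᵥ G.adjMatrix ℝ *ᵥ x ≤ d * (∑ v, x v) ^ 2 / Fintype.card ι + lam * (x ⬝ᵥ x) := by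
  have hA : (G.adjMatrix ℝ).IsHermitian := isSymm_adjMatrix G
  set b := hA.eigenvectorBasis
  set μ := hA.eigenvalues
  have hb_eigen : ∀ i, μ i = d ∨ |μ i| ≤ lam := fun i =>
    hspec (μ i) ⟨b i, fun h => b.orthonormal.ne_zero i ((WithLp.ofLp_eq_zero (p := 2)).mp h),
      hA.mulVec_eigenvectorBasis i⟩
  -- Eigenvectors for the eigenvalue `d` are constant, so they only see the mean of `x`.
  have htop :
      ∑ i with μ i = d, μ i * (⇑(b i) ⬝ᵥ x) ^ 2 ≤ d * (∑ v, x v) ^ 2 / Fintype.card ι := by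
    set m := Function.const ι ((∑ v, x v) / Fintype.card ι)
    have hn : (Fintype.card ι : ℝ) ≠ 0 := by have := hG.nonempty; positivity
    have hm : m ⬝ᵥ m = (∑ v, x v) ^ 2 / Fintype.card ι := by
      simp only [m, dotProduct, Function.const_apply, sum_const, card_univ, nsmul_eq_mul]
      field_simp
    calc ∑ i with μ i = d, μ i * (⇑(b i) ⬝ᵥ x) ^ 2
        = d * ∑ i with μ i = d, (⇑(b i) ⬝ᵥ m) ^ 2 := by
          rw [mul_sum]
          refine sum_congr rfl fun i hi => ?_
          have hi := (mem_filter.mp hi).2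
          rw [hi, dotProduct_eq_dotProduct_const_mean
            (eq_of_adjMatrix_mulVec_eq_smul hG hd (hi ▸ hA.mulVec_eigenvectorBasis i))]
      _ ≤ d * ∑ i, (⇑(b i) ⬝ᵥ m) ^ 2 := by
          gcongr
          exact subset_univ _
      _ = d * (∑ v, x v) ^ 2 / Fintype.card ι := by rw [b.sum_sq_dotProduct, hm, mul_div_assoc]
  have hrest : ∑ i with ¬ μ i = d, μ i * (⇑(b i) ⬝ᵥ x) ^ 2 ≤ lam * (x ⬝ᵥ x) := by
    rw [← b.sum_sq_dotProduct, mul_sum]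
    refine (sum_le_sum fun i hi => ?_).trans
      (sum_le_univ_sum_of_nonneg fun i => mul_nonneg hlam (sq_nonneg _))
    have := (hb_eigen i).resolve_left (mem_filter.mp hi).2
    exact mul_le_mul_of_nonneg_right ((le_abs_self _).trans this) (sq_nonneg _)
  rw [hA.dotProduct_mulVec_eq_sum_eigenvalues, ← sum_filter_add_sum_filter_not _ (μ · = d)]
  exact add_le_add htop hrest

theorem indicator_dotProduct_adjMatrix_mulVec_indicator (S : Finset ι) :
    (fun v => if v ∈ S then (1 : ℝ) else 0) ⬝ᵥ
        G.adjMatrix ℝ *ᵥ (fun v => if v ∈ S then (1 : ℝ) else 0) =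
      ∑ u ∈ S, (#{w ∈ S | G.Adj u w} : ℝ) := by
  simp only [dotProduct, adjMatrix_mulVec_apply, ite_mul, one_mul, zero_mul, sum_ite_mem,
    univ_inter, sum_const, nsmul_one]
  refine sum_congr rfl fun u _ => ?_
  congr 2
  ext w
  simp [and_comm]

end SimpleGraph

section Skeleton

variable {ι : Type} [DecidableEq ι]

theorem card_edges_within_containing_le (Y : SComplex ι) (S : Finset ι) (u : ι) :
    #{e ∈ {e ∈ Y.K 2 | e ⊆ S} | u ∈ e} ≤ #{w ∈ S | (skeletonGraph Y).Adj u w} := by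
  refine (card_le_card fun e he => ?_).trans (card_image_le (f := fun w => {u, w}))
  simp only [SComplex.K, mem_filter] at he
  obtain ⟨⟨⟨hface, hcard⟩, hS⟩, hu⟩ := he
  obtain ⟨a, b, hab, rfl⟩ := card_eq_two.mp hcard
  rcases mem_insert.mp hu with rfl | hu
  · exact mem_image.mpr ⟨b, mem_filter.mpr ⟨hS (by simp), hab, hface⟩, rfl⟩
  · obtain rfl := mem_singleton.mp hu
    exact mem_image.mpr
      ⟨a, mem_filter.mpr ⟨hS (by simp), hab.symm, by rwa [pair_comm]⟩, pair_comm _ _⟩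

theorem two_mul_card_edges_within_le_dotProduct [Fintype ι] (Y : SComplex ι) (S : Finset ι) :
    2 * (#{e ∈ Y.K 2 | e ⊆ S} : ℝ) ≤
      (fun v => if v ∈ S then (1 : ℝ) else 0) ⬝ᵥ
        (skeletonGraph Y).adjMatrix ℝ *ᵥ (fun v => if v ∈ S then (1 : ℝ) else 0) := by
  have hK2 : ∀ e ∈ {e ∈ Y.K 2 | e ⊆ S}, #e = 2 := fun e he =>
    (mem_filter.mp (mem_filter.mp he).1).2
  rw [SimpleGraph.indicator_dotProduct_adjMatrix_mulVec_indicator, ← Nat.cast_ofNat,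
    ← Nat.cast_mul, ← sum_card_filter_mem_eq_two_mul_card (fun e he => (mem_filter.mp he).2) hK2]
  push_cast
  exact sum_le_sum fun u _ => by exact_mod_cast card_edges_within_containing_le Y S u

theorem two_mul_card_edges_within_le [Fintype ι] {Y : SComplex ι} {d : ℕ} {lam : ℝ}
    (hconn : (skeletonGraph Y).Connected) (hd : (skeletonGraph Y).IsRegularOfDegree d)
    (hlam : 0 ≤ lam)
    (hspec : ∀ μ : ℝ, (∃ f : ι → ℝ, f ≠ 0 ∧ (skeletonGraph Y).adjMatrix ℝ *ᵥ f = μ • f) →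
      μ = d ∨ |μ| ≤ lam)
    (S : Finset ι) :
    2 * (#{e ∈ Y.K 2 | e ⊆ S} : ℝ) ≤ d * (#S : ℝ) ^ 2 / Fintype.card ι + lam * #S := by
  have hmix := SimpleGraph.dotProduct_adjMatrix_mulVec_le hconn hd hlam hspec
    (fun v => if v ∈ S then (1 : ℝ) else 0)
  have hsum : ∑ v, (if v ∈ S then (1 : ℝ) else 0) = #S := by simp
  have hdot : (fun v => if v ∈ S then (1 : ℝ) else 0) ⬝ᵥ (fun v => if v ∈ S then 1 else 0) =
      #S := by simp [dotProduct]
  rw [hsum, hdot] at hmix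
  exact (two_mul_card_edges_within_le_dotProduct Y S).trans hmix

theorem card_mul_le_two_mul_card_of_le_card_alphaV [Fintype ι] {α : Finset (Finset ι)}
    (h2 : ∀ e ∈ α, #e = 2) {S : Finset ι} {c : ℝ} (hS : ∀ v ∈ S, c ≤ #(alphaV α v)) :
    #S * c ≤ 2 * #α := by
  calc (#S : ℝ) * c = ∑ _v ∈ S, c := by rw [sum_const, nsmul_eq_mul]
    _ ≤ ∑ v ∈ S, (#(alphaV α v) : ℝ) := sum_le_sum hS
    _ ≤ ∑ v, (#(alphaV α v) : ℝ) := sum_le_univ_sum_of_nonneg fun v => by positivity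
    _ = 2 * #α := by
      exact_mod_cast sum_card_filter_mem_eq_two_mul_card (fun e _ => subset_univ e) h2

end Skeleton

theorem le_of_mixing_of_thick {Q lam n a s E c c' : ℝ} (hQ : 0 < Q) (hn : 0 < n)
    (hlam : 0 ≤ lam) (hs : 0 ≤ s) (hc : 0 < c) (hc' : 0 < c')
    (hmix : 2 * E ≤ Q * s ^ 2 / n + lam * s) (hthick : s * (c * Q / 2) ≤ 2 * a)
    (hsize : a ≤ Q * n / (8 * c')) :
    E ≤ a * (1 / (c ^ 2 * c') + 2 * lam / (c * Q)) := by
  have hs4 : s * c * Q ≤ 4 * a := by linarith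
  have ha : 0 ≤ a := by have := mul_nonneg (mul_nonneg hs hc.le) hQ.le; linarith
  have hsize' : 8 * c' * a ≤ Q * n := by rwa [le_div_iff₀ (by positivity), mul_comm] at hsize
  have hquad : Q * s ^ 2 / n ≤ 2 * a / (c ^ 2 * c') := by
    rw [div_le_div_iff₀ hn (by positivity)]
    refine le_of_mul_le_mul_left ?_ hQ
    calc Q * (Q * s ^ 2 * (c ^ 2 * c')) = (s * c * Q) ^ 2 * c' := by ring
      _ ≤ (4 * a) ^ 2 * c' := by gcongr
      _ = 2 * a * (8 * c' * a) := by ring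
      _ ≤ 2 * a * (Q * n) := by gcongr
      _ = Q * (2 * a * n) := by ring
  have hlin : lam * s ≤ 4 * lam * a / (c * Q) := by
    rw [le_div_iff₀ (by positivity)]
    nlinarith
  have hsplit : a * (1 / (c ^ 2 * c') + 2 * lam / (c * Q)) =
      (2 * a / (c ^ 2 * c') + 4 * lam * a / (c * Q)) / 2 := by
    field_simp
    ring
  rw [hsplit]
  linarith

theorem edges_within_thick_vertices_upper_bound_general
    {V : Type} [Fintype V] [DecidableEq V] (q : ℕ) (Y : SComplex V) (hY : Setup2 q Y)
    (ε : ℝ) (hε1 : ε < 1) (ε' : ℝ) (hε' : 0 < ε')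
    (α : Finset (Finset V)) (hα : α ⊆ Y.K 2)
    (hsize : (α.card : ℝ) ≤
      2 * ((q : ℝ) ^ 2 + q + 1) * (Fintype.card V : ℝ) / (8 * (1 + ε'))) :
    (((Y.K 2).filter fun e =>
        e ⊆ Finset.univ.filter (fun v : V => (alphaV α v).Nonempty ∧
          ¬ ((alphaV α v).card : ℝ) < (1 - ε) * (2 * ((q : ℝ) ^ 2 + q + 1)) / 2)).card : ℝ)
      ≤ (α.card : ℝ) *
          (1 / ((1 - ε) ^ 2 * (1 + ε')) +
            12 * (q : ℝ) / ((1 - ε) * (2 * ((q : ℝ) ^ 2 + q + 1)))) := by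
  obtain ⟨-, -, -, hconn, hdeg, hspec⟩ := hY
  have hQ : ((2 * (q ^ 2 + q + 1) : ℕ) : ℝ) = 2 * ((q : ℝ) ^ 2 + q + 1) := by push_cast; ring
  set S := Finset.univ.filter (fun v : V => (alphaV α v).Nonempty ∧
    ¬ ((alphaV α v).card : ℝ) < (1 - ε) * (2 * ((q : ℝ) ^ 2 + q + 1)) / 2)
  have hmix := two_mul_card_edges_within_le hconn hdeg (lam := 6 * q) (by positivity)
    (by simpa only [hQ] using hspec) S
  have hthick := card_mul_le_two_mul_card_of_le_card_alphaV
    (fun e he => (mem_filter.mp (hα he)).2) (S := S) fun v hv => not_lt.mp (mem_filter.mp hv).2.2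
  rw [hQ] at hmix
  have hn : (0 : ℝ) < Fintype.card V := by have := hconn.nonempty; positivity
  refine (le_of_mixing_of_thick (by positivity) hn (by positivity) (by positivity)
    (by linarith) (by linarith) hmix hthick hsize).trans_eq ?_
  ring

/-- Under the standing hypotheses (with `Q = 2(q²+q+1)` and `n` vertices),
fix `ε ∈ (0,1)` and `ε' > 0` and assume `|α| ≤ Qn/(8(1+ε'))`.  Then the number of edges of
the 1-skeleton with both endpoints in the set `S` of thick vertices satisfies
`|E(S)| ≤ |α|·(1/((1−ε)²(1+ε')) + 12q/((1−ε)Q))`. -/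
theorem edges_within_thick_vertices_upper_bound
    {V : Type} [Fintype V] [DecidableEq V] (q : ℕ) (Y : SComplex V) (hY : Setup2 q Y)
    (ε : ℝ) (hε0 : 0 < ε) (hε1 : ε < 1) (ε' : ℝ) (hε' : 0 < ε')
    (α : Finset (Finset V)) (hα : α ⊆ Y.K 2)
    (hsize : (α.card : ℝ) ≤
      2 * ((q : ℝ) ^ 2 + q + 1) * (Fintype.card V : ℝ) / (8 * (1 + ε'))) :
    (((Y.K 2).filter fun e =>
        e ⊆ Finset.univ.filter (fun v : V => (alphaV α v).Nonempty ∧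
          ¬ ((alphaV α v).card : ℝ) < (1 - ε) * (2 * ((q : ℝ) ^ 2 + q + 1)) / 2)).card : ℝ)
      ≤ (α.card : ℝ) *
          (1 / ((1 - ε) ^ 2 * (1 + ε')) +
            12 * (q : ℝ) / ((1 - ε) * (2 * ((q : ℝ) ^ 2 + q + 1)))) :=
  edges_within_thick_vertices_upper_bound_general q Y hY ε hε1 ε' hε' α hα hsize
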